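/- The set of interval-closed sets of the type A root poset A_{n−1} is in bijection with the set of lattice walks in the first quadrant that start and end at the origin, consist of 2n steps from {(1,0), (−1,0), (1,−1), (−1,1)}, and in which no (−1,0) step ending on the x-axis is immediately followed by a (1,0) step. -/

import Mathlib

/-!
The coordinates `x` and `x + 2y` of the walk are the heights of two nested Dyck paths, and the
interval-closed set is the region between them: at time `s` it consists of the roots `[i, j]` with
`i + j = s` and `x ≤ j - i < x + 2y`. Where this region is empty the two paths touch and the walk
runs along the x-axis. There the set does not see the paths, but the forbidden pattern (a west step
onto the axis followed by an east step) is a common valley, so the touching stretches are as high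
as the rest allows, and the walk is determined by the set.
-/

/-- Steps of a quarter-plane walk: east `(1,0)`, west `(−1,0)`,
southeast `(1,−1)`, northwest `(−1,1)`. -/
inductive QStep : Type
  | e : QStep
  | w : QStep
  | se : QStep
  | nw : QStep
  deriving DecidableEq

/-- Horizontal displacement of a step. -/
def QStep.dx : QStep → ℤ
  | .e => 1
  | .w => -1
  | .se => 1
  | .nw => -1

/-- Vertical displacement of a step. -/
def QStep.dy : QStep → ℤ
  | .se => -1
  | .nw => 1
  | _ => 0

/-- x-coordinate of the walk `W` (started at the origin) after `k` steps. -/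
def walkX (W : List QStep) (k : ℕ) : ℤ := ((W.take k).map QStep.dx).sum

/-- y-coordinate of the walk `W` after `k` steps. -/
def walkY (W : List QStep) (k : ℕ) : ℤ := ((W.take k).map QStep.dy).sum

/-- The walk stays in the first quadrant. -/
def InQuadrant (W : List QStep) : Prop :=
  ∀ k : ℕ, 0 ≤ walkX W k ∧ 0 ≤ walkY W k

/-- No west step ending on the x-axis is immediately followed by an east step. -/
def NoWThenE (W : List QStep) : Prop :=
  ∀ k : ℕ, ¬ (W[k]? = some QStep.w ∧ walkY W (k + 1) = 0 ∧
    W[k + 1]? = some QStep.e)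

/-- The elements of the type `A` root poset `A_{n−1}`: intervals `[i,j]` with
`1 ≤ i ≤ j ≤ n−1`, encoded as pairs `(i,j)` with `i ≤ j`. -/
def rootLE {k : ℕ} (p q : Fin k × Fin k) : Prop := q.1 ≤ p.1 ∧ p.2 ≤ q.2

def rootLT {k : ℕ} (p q : Fin k × Fin k) : Prop := rootLE p q ∧ p ≠ q

lemma QStep.eq_of_dx_eq_of_dy_eq {a b : QStep} (hx : a.dx = b.dx) (hy : a.dy = b.dy) : a = b := by
  cases a <;> cases b <;> simp_all [QStep.dx, QStep.dy]

lemma monotone_natCast_add_sub_of_abs_sub_le_one {f : ℕ → ℤ} (hf : ∀ k, |f (k + 1) - f k| ≤ 1) :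
    Monotone (fun k : ℕ => (k : ℤ) + f k) ∧ Monotone (fun k : ℕ => (k : ℤ) - f k) := by
  constructor <;> refine monotone_nat_of_le_succ fun k => ?_ <;>
    have := abs_le.1 (hf k) <;> push_cast <;> linarith

section Walk

variable {W : List QStep} {k s t : ℕ}

lemma walkX_succ {st : QStep} (h : W[k]? = some st) : walkX W (k + 1) = walkX W k + st.dx := by
  simp [walkX, List.take_add_one, h]

lemma walkY_succ {st : QStep} (h : W[k]? = some st) : walkY W (k + 1) = walkY W k + st.dy := by
  simp [walkY, List.take_add_one, h]

lemma walkX_of_length_le (h : W.length ≤ k) : walkX W k = walkX W W.length := by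
  simp [walkX, List.take_of_length_le h]

lemma walkY_of_length_le (h : W.length ≤ k) : walkY W k = walkY W W.length := by
  simp [walkY, List.take_of_length_le h]

lemma exists_getElem?_eq_some (h : k < W.length) : ∃ st, W[k]? = some st :=
  ⟨W[k], List.getElem?_eq_getElem h⟩

lemma abs_walkX_succ_sub_le_one (W : List QStep) (k : ℕ) :
    |walkX W (k + 1) - walkX W k| ≤ 1 := by
  rcases lt_or_ge k W.length with hk | hk
  · obtain ⟨st, hst⟩ := exists_getElem?_eq_some hk
    rw [walkX_succ hst]
    cases st <;> simp only [QStep.dx] <;> rw [abs_le] <;> constructor <;> linarith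
  · rw [walkX_of_length_le hk, walkX_of_length_le (by omega : W.length ≤ k + 1)]
    simp

lemma abs_walkXY_succ_sub_le_one (W : List QStep) (k : ℕ) :
    |walkX W (k + 1) + 2 * walkY W (k + 1) - (walkX W k + 2 * walkY W k)| ≤ 1 := by
  rcases lt_or_ge k W.length with hk | hk
  · obtain ⟨st, hst⟩ := exists_getElem?_eq_some hk
    rw [walkX_succ hst, walkY_succ hst]
    cases st <;> simp only [QStep.dx, QStep.dy] <;> rw [abs_le] <;> constructor <;> linarith
  · rw [walkX_of_length_le hk, walkX_of_length_le (by omega : W.length ≤ k + 1),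
      walkY_of_length_le hk, walkY_of_length_le (by omega : W.length ≤ k + 1)]
    simp

lemma monotone_walkX (W : List QStep) :
    Monotone (fun k : ℕ => (k : ℤ) + walkX W k) ∧ Monotone (fun k : ℕ => (k : ℤ) - walkX W k) :=
  monotone_natCast_add_sub_of_abs_sub_le_one (abs_walkX_succ_sub_le_one W)

lemma monotone_walkXY (W : List QStep) :
    Monotone (fun k : ℕ => (k : ℤ) + (walkX W k + 2 * walkY W k)) ∧
      Monotone (fun k : ℕ => (k : ℤ) - (walkX W k + 2 * walkY W k)) :=
  monotone_natCast_add_sub_of_abs_sub_le_one (abs_walkXY_succ_sub_le_one W)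

lemma walkXY_le_self (W : List QStep) (s : ℕ) : walkX W s + 2 * walkY W s ≤ s := by
  simpa [walkX, walkY] using (monotone_walkXY W).2 (Nat.zero_le s)

lemma two_dvd_sub_walkX (h : s ≤ W.length) : (2 : ℤ) ∣ s - walkX W s := by
  induction s with
  | zero => simp [walkX]
  | succ s ih =>
    obtain ⟨st, hst⟩ := exists_getElem?_eq_some (by omega : s < W.length)
    have := ih (by omega)
    rw [walkX_succ hst]
    cases st <;> simp only [QStep.dx] <;> push_cast <;> omega

lemma eq_of_walkX_eq_of_walkY_eq {V : List QStep} (hlen : V.length = W.length)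
    (hX : ∀ k ≤ W.length, walkX V k = walkX W k) (hY : ∀ k ≤ W.length, walkY V k = walkY W k) :
    V = W := by
  refine List.ext_getElem hlen fun k hV hW => QStep.eq_of_dx_eq_of_dy_eq ?_ ?_
  · have hV' := walkX_succ (List.getElem?_eq_getElem hV)
    have hW' := walkX_succ (List.getElem?_eq_getElem hW)
    linarith [hX k (by omega), hX (k + 1) (by omega)]
  · have hV' := walkY_succ (List.getElem?_eq_getElem hV)
    have hW' := walkY_succ (List.getElem?_eq_getElem hW)
    linarith [hY k (by omega), hY (k + 1) (by omega)]

end Walk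

namespace TypeARoot

def IsAdmissibleWalk (n : ℕ) (W : List QStep) : Prop :=
  W.length = 2 * n ∧ InQuadrant W ∧ walkX W W.length = 0 ∧ walkY W W.length = 0 ∧ NoWThenE W

namespace IsAdmissibleWalk

variable {n s : ℕ} {W : List QStep}

lemma walkX_eq_zero (hW : IsAdmissibleWalk n W) (hs : 2 * n ≤ s) : walkX W s = 0 := by
  rw [walkX_of_length_le (hW.1 ▸ hs), hW.2.2.1]

lemma walkY_eq_zero (hW : IsAdmissibleWalk n W) (hs : 2 * n ≤ s) : walkY W s = 0 := by
  rw [walkY_of_length_le (hW.1 ▸ hs), hW.2.2.2.1]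

lemma walkX_nonneg (hW : IsAdmissibleWalk n W) (s : ℕ) : 0 ≤ walkX W s := (hW.2.1 s).1

lemma walkY_nonneg (hW : IsAdmissibleWalk n W) (s : ℕ) : 0 ≤ walkY W s := (hW.2.1 s).2

lemma walkXY_le (hW : IsAdmissibleWalk n W) (hs : s ≤ 2 * n) :
    walkX W s + 2 * walkY W s ≤ 2 * n - s := by
  have := (monotone_walkXY W).1 hs
  simp only [hW.walkX_eq_zero le_rfl, hW.walkY_eq_zero le_rfl] at this
  push_cast at this
  linarith

lemma exists_getElem?_eq_some (hW : IsAdmissibleWalk n W) (hs : s < 2 * n) :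
    ∃ st, W[s]? = some st :=
  _root_.exists_getElem?_eq_some (hW.1 ▸ hs)

lemma not_west_then_east (hW : IsAdmissibleWalk n W) {k : ℕ} (hw : W[k]? = some .w)
    (hy : walkY W (k + 1) = 0) : W[k + 1]? ≠ some .e :=
  fun he => hW.2.2.2.2 k ⟨hw, hy, he⟩

/-- Looking back from a point on the x-axis, the walk either arrived by a west step, or came
by east steps from the origin or from a point above the axis. -/
lemma exists_above_before_of_walkY_eq_zero (hW : IsAdmissibleWalk n W) (hs : s ≤ 2 * n)
    (hy : walkY W s = 0) :
    (s : ℤ) - walkX W s = 0 ∨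
      (∃ t ≤ s, 0 < walkY W t ∧ (s : ℤ) - walkX W s ≤ t - walkX W t) ∨
      ∃ k, k + 1 = s ∧ W[k]? = some .w := by
  induction s with
  | zero => left; simp [walkX]
  | succ s ih =>
    obtain ⟨st, hst⟩ := hW.exists_getElem?_eq_some (by omega : s < 2 * n)
    have hX := walkX_succ hst
    have hY := walkY_succ hst
    cases st with
    | e =>
      simp only [QStep.dx, QStep.dy] at hX hY
      rcases ih (by omega) (by omega) with h | ⟨t, ht, hYt, hD⟩ | ⟨k, rfl, hw⟩
      · left; push_cast; omega
      · right; left; exact ⟨t, by omega, hYt, by push_cast; omega⟩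
      · exact absurd hst (hW.not_west_then_east hw (by omega))
    | w => right; right; exact ⟨s, rfl, hst⟩
    | se =>
      simp only [QStep.dx, QStep.dy] at hX hY
      right; left; exact ⟨s, by omega, by omega, by push_cast; omega⟩
    | nw =>
      simp only [QStep.dy] at hY
      have := hW.walkY_nonneg s
      omega

/-- After a west step onto the x-axis the walk continues west until it leaves the axis by a
north-west step or reaches the end. -/
lemma exists_above_after_of_west (hW : IsAdmissibleWalk n W) (hs : s ≤ 2 * n)
    (hy : walkY W s = 0) (hw : ∃ k, k + 1 = s ∧ W[k]? = some .w) :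
    (s : ℤ) - walkX W s ≤ 2 * ((s - n : ℕ) : ℤ) ∨
      ∃ t, 0 < walkY W t ∧ (s : ℤ) - walkX W s + 2 * ((t - s : ℕ) : ℤ) ≤ t - walkX W t := by
  obtain ⟨d, hd⟩ : ∃ d, s + d = 2 * n := ⟨2 * n - s, by omega⟩
  induction d generalizing s with
  | zero =>
    left
    rw [hW.walkX_eq_zero (by omega)]
    omega
  | succ d ih =>
    obtain ⟨k, rfl, hw⟩ := hw
    obtain ⟨st, hst⟩ := hW.exists_getElem?_eq_some (by omega : k + 1 < 2 * n)
    have hX := walkX_succ hst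
    have hY := walkY_succ hst
    cases st with
    | e => exact absurd hst (hW.not_west_then_east hw hy)
    | w =>
      simp only [QStep.dx, QStep.dy] at hX hY
      rcases ih (by omega) (by omega) ⟨k + 1, rfl, hst⟩ (by omega) with h | ⟨t, hYt, hD⟩
      · left; push_cast at h ⊢; omega
      · right; exact ⟨t, hYt, by push_cast at hD ⊢; omega⟩
    | se =>
      simp only [QStep.dy] at hY
      have := hW.walkY_nonneg (k + 1 + 1)
      omega
    | nw =>
      simp only [QStep.dx, QStep.dy] at hX hY
      right; exact ⟨k + 1 + 1, by omega, by push_cast; omega⟩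

lemma sub_walkX_le_of_walkY_eq_zero (hW : IsAdmissibleWalk n W) (hs : s ≤ 2 * n)
    (hy : walkY W s = 0) :
    (s : ℤ) - walkX W s ≤ 2 * ((s - n : ℕ) : ℤ) ∨
      ∃ t, 0 < walkY W t ∧ (s : ℤ) - walkX W s + 2 * ((t - s : ℕ) : ℤ) ≤ t - walkX W t := by
  rcases hW.exists_above_before_of_walkY_eq_zero hs hy with h | ⟨t, ht, hYt, hD⟩ | hw
  · left; omega
  · right; exact ⟨t, hYt, by rw [Nat.sub_eq_zero_of_le ht]; simpa using hD⟩
  · exact hW.exists_above_after_of_west hs hy hw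

end IsAdmissibleWalk

abbrev Root (n : ℕ) := {p : Fin (n - 1) × Fin (n - 1) // p.1 ≤ p.2}

variable {n : ℕ}

/-- `left e` and `right e` are the 1-based endpoints `i ≤ j` of the interval `[i, j]`, and the walk
of an interval-closed set visits the antichain `left e + right e = s` at time `s`. -/
def left (e : Root n) : ℕ := e.1.1 + 1

def right (e : Root n) : ℕ := e.1.2 + 1

def diag (e : Root n) : ℕ := left e + right e

lemma one_le_left (e : Root n) : 1 ≤ left e := Nat.le_add_left 1 _

lemma left_le_right (e : Root n) : left e ≤ right e := by
  have := e.2; simp only [left, right, Fin.le_def] at *; omega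

lemma right_lt (e : Root n) : right e < n := by
  have := e.1.2.isLt; simp only [right]; omega

def ofEndpoints (i j : ℕ) (hi : 1 ≤ i) (hij : i ≤ j) (hj : j < n) : Root n :=
  ⟨(⟨i - 1, by omega⟩, ⟨j - 1, by omega⟩), by simp only [Fin.mk_le_mk]; omega⟩

@[simp] lemma left_ofEndpoints {i j : ℕ} (hi hij) (hj : j < n) :
    left (ofEndpoints i j hi hij hj) = i := by
  simp only [left, ofEndpoints]; omega

@[simp] lemma right_ofEndpoints {i j : ℕ} (hi hij) (hj : j < n) :
    right (ofEndpoints i j hi hij hj) = j := by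
  simp only [right, ofEndpoints]; omega

lemma ext_of_left_of_right {e f : Root n} (hl : left e = left f) (hr : right e = right f) :
    e = f := by
  simp only [left, right] at hl hr
  exact Subtype.ext (Prod.ext (Fin.ext (by omega)) (Fin.ext (by omega)))

lemma rootLE_iff {e f : Root n} : rootLE e.1 f.1 ↔ left f ≤ left e ∧ right e ≤ right f := by
  simp only [rootLE, left, right, Fin.le_def, add_le_add_iff_right]

lemma left_diag_bounds (e : Root n) : 1 ≤ left e ∧ 2 * left e ≤ diag e ∧ diag e < n + left e := by
  have := left_le_right e
  have := right_lt e
  simp only [diag, left, right] at *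
  omega

def IsIntervalClosed (I : Finset (Root n)) : Prop :=
  ∀ x ∈ I, ∀ y ∈ I, ∀ z : Root n, rootLT x.1 z.1 → rootLT z.1 y.1 → z ∈ I

lemma IsIntervalClosed.mem_of_rootLE {I : Finset (Root n)} (hI : IsIntervalClosed I)
    {x y z : Root n} (hx : x ∈ I) (hy : y ∈ I) (hxz : rootLE x.1 z.1) (hzy : rootLE z.1 y.1) :
    z ∈ I := by
  by_cases hzx : z = x
  · exact hzx ▸ hx
  by_cases hzy' : z = y
  · exact hzy' ▸ hy
  exact hI x hx y hy z ⟨hxz, fun h => hzx (Subtype.ext h.symm)⟩ ⟨hzy, fun h => hzy' (Subtype.ext h)⟩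

def slice (I : Finset (Root n)) (s : ℕ) : Finset ℕ := (I.filter (diag · = s)).image left

section Slice

variable {I : Finset (Root n)} {s t u i a b : ℕ}

lemma mem_slice : i ∈ slice I s ↔ ∃ e ∈ I, diag e = s ∧ left e = i := by
  simp only [slice, Finset.mem_image, Finset.mem_filter, and_assoc]

lemma left_mem_slice {e : Root n} (he : e ∈ I) : left e ∈ slice I (diag e) :=
  mem_slice.2 ⟨e, he, rfl, rfl⟩

lemma mem_iff_left_mem_slice {e : Root n} : e ∈ I ↔ left e ∈ slice I (diag e) := by
  refine ⟨left_mem_slice, fun h => ?_⟩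
  obtain ⟨f, hf, hd, hl⟩ := mem_slice.1 h
  rwa [← ext_of_left_of_right hl (by simp only [diag] at hd; omega)]

lemma bounds_of_mem_slice (h : i ∈ slice I s) : 1 ≤ i ∧ 2 * i ≤ s ∧ s < n + i := by
  obtain ⟨e, -, rfl, rfl⟩ := mem_slice.1 h
  exact left_diag_bounds e

lemma slice_zero : slice I 0 = ∅ :=
  Finset.eq_empty_of_forall_notMem fun _ h => by have := bounds_of_mem_slice h; omega

lemma slice_two_mul : slice I (2 * n) = ∅ :=
  Finset.eq_empty_of_forall_notMem fun _ h => by have := bounds_of_mem_slice h; omega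

/-- The interval `[i, u - i]` lies between the intervals `[a, s - a] ⊆ [b, t - b]` of `I`. -/
lemma IsIntervalClosed.mem_slice_of_between (hI : IsIntervalClosed I) (ha : a ∈ slice I s)
    (hb : b ∈ slice I t) (hbi : b ≤ i) (hia : i ≤ a) (hsu : s + i ≤ a + u) (hut : u + b ≤ t + i) :
    i ∈ slice I u := by
  obtain ⟨x, hx, rfl, rfl⟩ := mem_slice.1 ha
  obtain ⟨y, hy, rfl, rfl⟩ := mem_slice.1 hb
  have := left_le_right x
  have := right_lt y
  simp only [diag] at hsu hut
  have hz := hI.mem_of_rootLE (z := ofEndpoints i (u - i) (by have := one_le_left y; omega)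
      (by omega) (by omega)) hx hy (rootLE_iff.2 (by simp; omega)) (rootLE_iff.2 (by simp; omega))
  simpa [diag, Nat.add_sub_cancel' (by omega : i ≤ u)] using left_mem_slice hz

variable (I s) in
def top : ℕ := if h : (slice I s).Nonempty then (slice I s).max' h else 0

variable (I s) in
def bot : ℕ := if h : (slice I s).Nonempty then (slice I s).min' h else 0

lemma top_mem (h : (slice I s).Nonempty) : top I s ∈ slice I s := by
  rw [top, dif_pos h]; exact Finset.max'_mem _ h

lemma bot_mem (h : (slice I s).Nonempty) : bot I s ∈ slice I s := by
  rw [bot, dif_pos h]; exact Finset.min'_mem _ h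

lemma le_top (hi : i ∈ slice I s) : i ≤ top I s := by
  rw [top, dif_pos ⟨i, hi⟩]; exact Finset.le_max' _ _ hi

lemma bot_le (hi : i ∈ slice I s) : bot I s ≤ i := by
  rw [bot, dif_pos ⟨i, hi⟩]; exact Finset.min'_le _ _ hi

namespace IsIntervalClosed

variable (hI : IsIntervalClosed I)
include hI

lemma mem_slice_of_le_of_le (hb : b ∈ slice I s) (ha : a ∈ slice I s) (hbi : b ≤ i)
    (hia : i ≤ a) : i ∈ slice I s :=
  hI.mem_slice_of_between ha hb hbi hia (by omega) (by omega)

lemma slice_eq_Icc (h : (slice I s).Nonempty) : slice I s = Finset.Icc (bot I s) (top I s) := by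
  ext i
  rw [Finset.mem_Icc]
  exact ⟨fun hi => ⟨bot_le hi, le_top hi⟩,
    fun hi => hI.mem_slice_of_le_of_le (bot_mem h) (top_mem h) hi.1 hi.2⟩

lemma card_slice (h : (slice I s).Nonempty) : (slice I s).card = top I s + 1 - bot I s := by
  rw [hI.slice_eq_Icc h, Nat.card_Icc]

lemma top_le_top_add (ht : (slice I t).Nonempty) (hs : (slice I s).Nonempty) :
    top I t ≤ top I s + (t - s) := by
  by_contra! hlt
  have := bot_le (top_mem hs)
  have := le_top (hI.mem_slice_of_between (top_mem ht) (bot_mem hs) (i := top I t - (t - s)) (u := s)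
    (by omega) (by omega) (by omega) (by omega))
  omega

lemma top_lt_top_of_empty (ht : (slice I t).Nonempty) (hs : (slice I s).Nonempty)
    (hu : slice I u = ∅) (htu : t ≤ u) (hus : u ≤ s) : top I t < top I s := by
  by_contra! hle
  have := hI.mem_slice_of_between (top_mem ht) (top_mem hs) (i := top I t) (u := u)
    hle le_rfl (by omega) (by omega)
  simp [hu] at this

lemma top_lt_top_add_of_empty (ht : (slice I t).Nonempty) (hs : (slice I s).Nonempty)
    (hu : slice I u = ∅) (hsu : s < u) (hut : u < t) : top I t < top I s + (t - s) := by
  by_contra! hle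
  have := hI.mem_slice_of_between (top_mem ht) (top_mem hs) (i := top I t - (t - u)) (u := u)
    (by omega) (by omega) (by omega) (by omega)
  simp [hu] at this

lemma bot_le_bot_succ (hs : (slice I s).Nonempty) (hs' : (slice I (s + 1)).Nonempty) :
    bot I s ≤ bot I (s + 1) := by
  by_contra! hlt
  have := bot_le (hI.mem_slice_of_between (bot_mem hs) (bot_mem hs') (i := bot I (s + 1)) (u := s)
    le_rfl hlt.le (by omega) (by omega))
  omega

lemma bot_succ_le_bot_add_one (hs : (slice I s).Nonempty) (hs' : (slice I (s + 1)).Nonempty) :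
    bot I (s + 1) ≤ bot I s + 1 := by
  by_contra! hlt
  have := bot_le (hI.mem_slice_of_between (bot_mem hs') (bot_mem hs) (i := bot I s + 1)
    (u := s + 1) (by omega) (by omega) (by omega) (by omega))
  omega

lemma bot_eq_top_of_empty_pred (hs : slice I s = ∅) (hs' : (slice I (s + 1)).Nonempty) :
    bot I (s + 1) = top I (s + 1) := by
  by_contra hne
  have hlt := lt_of_le_of_ne (bot_le (top_mem hs')) hne
  have hpred := hI.mem_slice_of_le_of_le (bot_mem hs') (top_mem hs') (i := top I (s + 1) - 1)
    (by omega) (by omega)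
  have := hI.mem_slice_of_between (top_mem hs') hpred (i := top I (s + 1) - 1) (u := s)
    le_rfl (by omega) (by omega) (by omega)
  simp [hs] at this

lemma bot_eq_top_of_empty_succ (hs : (slice I s).Nonempty) (hs' : slice I (s + 1) = ∅) :
    bot I s = top I s := by
  by_contra hne
  have hlt := lt_of_le_of_ne (bot_le (top_mem hs)) hne
  have hpred := hI.mem_slice_of_le_of_le (bot_mem hs) (top_mem hs) (i := top I s - 1)
    (by omega) (by omega)
  have := hI.mem_slice_of_between (top_mem hs) hpred (i := top I s) (u := s + 1)
    (by omega) le_rfl (by omega) (by omega)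
  simp [hs'] at this

end IsIntervalClosed

end Slice

/-- The number of west and north-west steps among the first `s` steps of the walk of `I`: the least
value that is at least `s - n`, nondecreasing and growing by at most one per step in `s`, and at
least `left e` at time `diag e` for every `e ∈ I`. -/
def leftSteps (I : Finset (Root n)) (s : ℕ) : ℕ := max (s - n) (I.sup fun e => left e - (diag e - s))

section LeftSteps

variable {I : Finset (Root n)} {s m : ℕ}

lemma leftSteps_le_iff : leftSteps I s ≤ m ↔ s - n ≤ m ∧ ∀ e ∈ I, left e - (diag e - s) ≤ m := by
  simp only [leftSteps, max_le_iff, Finset.sup_le_iff]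

lemma sub_le_leftSteps : s - n ≤ leftSteps I s := le_max_left _ _

lemma le_leftSteps {e : Root n} (he : e ∈ I) : left e - (diag e - s) ≤ leftSteps I s :=
  le_max_of_le_right (Finset.le_sup (f := fun e => left e - (diag e - s)) he)

lemma le_leftSteps_of_mem_slice {i t : ℕ} (hi : i ∈ slice I t) : i - (t - s) ≤ leftSteps I s := by
  obtain ⟨e, he, rfl, rfl⟩ := mem_slice.1 hi
  exact le_leftSteps he

lemma leftSteps_le_of_top (h₀ : s - n ≤ m)
    (h : ∀ t, (slice I t).Nonempty → top I t - (t - s) ≤ m) : leftSteps I s ≤ m :=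
  leftSteps_le_iff.2 ⟨h₀, fun _ he => (Nat.sub_le_sub_right (le_top (left_mem_slice he)) _).trans
    (h _ ⟨_, left_mem_slice he⟩)⟩

lemma leftSteps_eq_or_exists :
    leftSteps I s = s - n ∨ ∃ e ∈ I, leftSteps I s = left e - (diag e - s) := by
  rcases le_total (I.sup fun e => left e - (diag e - s)) (s - n) with h | h
  · exact Or.inl (max_eq_left h)
  · rcases I.eq_empty_or_nonempty with rfl | hne
    · exact Or.inl (max_eq_left (by simp))
    obtain ⟨e, he, heq⟩ := Finset.exists_mem_eq_sup I hne fun e => left e - (diag e - s)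
    exact Or.inr ⟨e, he, (max_eq_right h).trans heq⟩

lemma monotone_leftSteps : Monotone (leftSteps I) := fun _ _ hst =>
  leftSteps_le_iff.2 ⟨(Nat.sub_le_sub_right hst n).trans sub_le_leftSteps,
    fun _ he => (Nat.sub_le_sub_left (Nat.sub_le_sub_left hst _) _).trans (le_leftSteps he)⟩

lemma leftSteps_succ_le : leftSteps I (s + 1) ≤ leftSteps I s + 1 :=
  leftSteps_le_iff.2 ⟨by have := sub_le_leftSteps (I := I) (s := s); omega,
    fun e he => by have := le_leftSteps (s := s) he; omega⟩

lemma leftSteps_zero : leftSteps I 0 = 0 :=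
  Nat.le_zero.1 <| leftSteps_le_iff.2 ⟨by omega, fun e _ => by simp [diag]⟩

lemma leftSteps_two_mul : leftSteps I (2 * n) = n :=
  le_antisymm (leftSteps_le_iff.2 ⟨by omega, fun e _ => by have := left_diag_bounds e; omega⟩)
    (by have := sub_le_leftSteps (I := I) (s := 2 * n); omega)

lemma two_mul_leftSteps_le (hs : s ≤ 2 * n) : 2 * leftSteps I s ≤ s := by
  suffices leftSteps I s ≤ s / 2 by omega
  exact leftSteps_le_iff.2 ⟨by omega, fun e _ => by have := left_diag_bounds e; omega⟩

/-- On a run of empty slices, once the walk turns west it keeps going west. -/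
lemma leftSteps_succ_lt_of_empty (h₁ : slice I (s + 1) = ∅) (h₂ : slice I (s + 1 + 1) = ∅)
    (hlt : leftSteps I s < leftSteps I (s + 1)) :
    leftSteps I (s + 1) < leftSteps I (s + 1 + 1) := by
  rcases leftSteps_eq_or_exists (I := I) (s := s + 1) with h | ⟨e, he, h⟩
  · have := sub_le_leftSteps (I := I) (s := s + 1 + 1); omega
  · have hs := le_leftSteps (s := s) he
    have hs₂ := le_leftSteps (s := s + 1 + 1) he
    have hd₁ : diag e ≠ s + 1 := fun hd => by simpa [h₁, hd] using left_mem_slice he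
    have hd₂ : diag e ≠ s + 1 + 1 := fun hd => by simpa [h₂, hd] using left_mem_slice he
    omega

namespace IsIntervalClosed

variable (hI : IsIntervalClosed I)
include hI

lemma leftSteps_eq_top (hs : (slice I s).Nonempty) : leftSteps I s = top I s := by
  have := bounds_of_mem_slice (top_mem hs)
  refine le_antisymm (leftSteps_le_of_top (by omega) fun t ht => ?_) ?_
  · have := hI.top_le_top_add ht hs
    omega
  · simpa using le_leftSteps_of_mem_slice (s := s) (top_mem hs)

lemma leftSteps_succ_le_top (hs : (slice I s).Nonempty) (hs' : slice I (s + 1) = ∅) :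
    leftSteps I (s + 1) ≤ top I s := by
  have := bounds_of_mem_slice (top_mem hs)
  refine leftSteps_le_of_top (by omega) fun t ht => ?_
  rcases lt_trichotomy t (s + 1) with hlt | rfl | hgt
  · have := hI.top_le_top_add ht hs
    omega
  · simp [hs'] at ht
  · have := hI.top_lt_top_add_of_empty ht hs hs' (Nat.lt_succ_self s) hgt
    omega

lemma leftSteps_lt_top_succ (hs : slice I s = ∅) (hs' : (slice I (s + 1)).Nonempty) :
    leftSteps I s < top I (s + 1) := by
  have := bounds_of_mem_slice (top_mem hs')
  suffices leftSteps I s ≤ top I (s + 1) - 1 by omega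
  refine leftSteps_le_of_top (by omega) fun t ht => ?_
  rcases le_or_gt t s with hle | hgt
  · have := hI.top_lt_top_of_empty ht hs' hs hle (Nat.le_succ s)
    omega
  · have := hI.top_le_top_add ht hs'
    omega

lemma mem_slice_iff {i : ℕ} :
    i ∈ slice I s ↔ leftSteps I s < i + (slice I s).card ∧ i ≤ leftSteps I s := by
  rcases (slice I s).eq_empty_or_nonempty with hs | hs
  · simp only [hs, Finset.notMem_empty, Finset.card_empty, false_iff]
    omega
  have := (bounds_of_mem_slice (bot_mem hs)).1
  have := bot_le (top_mem hs)
  rw [hI.leftSteps_eq_top hs, hI.card_slice hs]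
  refine ⟨fun h => ⟨?_, le_top h⟩, fun h => hI.mem_slice_of_le_of_le (bot_mem hs) (top_mem hs)
    (by omega) h.2⟩
  have := bot_le h
  omega

lemma leftSteps_add_card_succ (s : ℕ) :
    leftSteps I s + (slice I (s + 1)).card ≤ leftSteps I (s + 1) + (slice I s).card ∧
      leftSteps I (s + 1) + (slice I s).card ≤ leftSteps I s + (slice I (s + 1)).card + 1 := by
  have hmono := monotone_leftSteps (I := I) (Nat.le_add_right s 1)
  have hlip := leftSteps_succ_le (I := I) (s := s)
  rcases (slice I s).eq_empty_or_nonempty with hs | hs <;>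
    rcases (slice I (s + 1)).eq_empty_or_nonempty with hs' | hs'
  · simp only [hs, hs', Finset.card_empty]
    omega
  · have := hI.leftSteps_lt_top_succ hs hs'
    rw [hs, Finset.card_empty, hI.card_slice hs', hI.bot_eq_top_of_empty_pred hs hs']
    rw [hI.leftSteps_eq_top hs'] at hlip ⊢
    omega
  · have := hI.leftSteps_succ_le_top hs hs'
    rw [hs', Finset.card_empty, hI.card_slice hs, hI.bot_eq_top_of_empty_succ hs hs']
    rw [hI.leftSteps_eq_top hs] at hmono ⊢
    omega
  · have := hI.bot_le_bot_succ hs hs'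
    have := hI.bot_succ_le_bot_add_one hs hs'
    have := bot_le (top_mem hs)
    have := bot_le (top_mem hs')
    rw [hI.card_slice hs, hI.card_slice hs', hI.leftSteps_eq_top hs, hI.leftSteps_eq_top hs']
    omega

end IsIntervalClosed

end LeftSteps

def stepOf (I : Finset (Root n)) (t : ℕ) : QStep :=
  if leftSteps I (t + 1) = leftSteps I t then
    if (slice I (t + 1)).card = (slice I t).card then .e else .se
  else if (slice I (t + 1)).card = (slice I t).card then .w else .nw

def encode (I : Finset (Root n)) : List QStep := (List.range (2 * n)).map (stepOf I)

section Encode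

variable {I : Finset (Root n)} {s t : ℕ}

lemma length_encode : (encode I).length = 2 * n := by simp [encode]

lemma getElem?_encode (ht : t < 2 * n) : (encode I)[t]? = some (stepOf I t) := by
  simp [encode, ht]

namespace IsIntervalClosed

variable (hI : IsIntervalClosed I)
include hI

lemma dx_stepOf (t : ℕ) :
    (stepOf I t).dx = 1 - 2 * ((leftSteps I (t + 1) : ℤ) - leftSteps I t) := by
  have := monotone_leftSteps (I := I) (Nat.le_add_right t 1)
  have := leftSteps_succ_le (I := I) (s := t)
  have := hI.leftSteps_add_card_succ t
  unfold stepOf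
  split_ifs <;> simp only [QStep.dx] <;> omega

lemma dy_stepOf (t : ℕ) :
    (stepOf I t).dy = ((slice I (t + 1)).card : ℤ) - (slice I t).card := by
  have := monotone_leftSteps (I := I) (Nat.le_add_right t 1)
  have := leftSteps_succ_le (I := I) (s := t)
  have := hI.leftSteps_add_card_succ t
  unfold stepOf
  split_ifs <;> simp only [QStep.dy] <;> omega

lemma walkX_encode (hs : s ≤ 2 * n) : walkX (encode I) s = s - 2 * (leftSteps I s : ℤ) := by
  induction s with
  | zero => simp [walkX, leftSteps_zero]
  | succ s ih =>
    rw [walkX_succ (getElem?_encode (by omega)), ih (by omega), hI.dx_stepOf]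
    push_cast
    ring

lemma walkY_encode (hs : s ≤ 2 * n) : walkY (encode I) s = (slice I s).card := by
  induction s with
  | zero => simp [walkY, slice_zero]
  | succ s ih =>
    rw [walkY_succ (getElem?_encode (by omega)), ih (by omega), hI.dy_stepOf]
    ring

lemma noWThenE_encode : NoWThenE (encode I) := by
  rintro k ⟨hw, hy, he⟩
  have hk : k + 1 < 2 * n := by
    by_contra! hk
    rw [List.getElem?_eq_none (by rw [length_encode]; omega)] at he
    exact absurd he (by simp)
  have hX₁ := walkX_succ hw
  have hX₂ := walkX_succ he
  have hY₂ := walkY_succ he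
  rw [hI.walkX_encode (by omega), hI.walkX_encode (by omega)] at hX₁ hX₂
  rw [hI.walkY_encode (by omega), hI.walkY_encode (by omega)] at hY₂
  rw [hI.walkY_encode (by omega)] at hy
  simp only [QStep.dx, QStep.dy] at hX₁ hX₂ hY₂
  have h₁ : slice I (k + 1) = ∅ := Finset.card_eq_zero.1 (by exact_mod_cast hy)
  have h₂ : slice I (k + 1 + 1) = ∅ := Finset.card_eq_zero.1 (by omega)
  have := leftSteps_succ_lt_of_empty h₁ h₂ (by omega)
  omega

lemma isAdmissibleWalk_encode : IsAdmissibleWalk n (encode I) := by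
  have hlen := length_encode (I := I)
  have hX_end : walkX (encode I) (2 * n) = 0 := by
    rw [hI.walkX_encode le_rfl, leftSteps_two_mul]; push_cast; ring
  have hY_end : walkY (encode I) (2 * n) = 0 := by
    rw [hI.walkY_encode le_rfl, slice_two_mul, Finset.card_empty, Nat.cast_zero]
  refine ⟨hlen, fun k => ?_, hlen ▸ hX_end, hlen ▸ hY_end, hI.noWThenE_encode⟩
  rcases le_total k (2 * n) with hk | hk
  · rw [hI.walkX_encode hk, hI.walkY_encode hk]
    have := two_mul_leftSteps_le (I := I) hk
    omega
  · rw [walkX_of_length_le (by omega), walkY_of_length_le (by omega), hlen, hX_end, hY_end]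
    exact ⟨le_rfl, le_rfl⟩

end IsIntervalClosed

end Encode

variable (n) in
def decode (W : List QStep) : Finset (Root n) :=
  Finset.univ.filter fun e =>
    (diag e : ℤ) - (walkX W (diag e) + 2 * walkY W (diag e)) < 2 * left e ∧
      2 * left e ≤ (diag e : ℤ) - walkX W (diag e)

section Decode

variable {W : List QStep} {s t i : ℕ}

lemma mem_decode {e : Root n} :
    e ∈ decode n W ↔ (diag e : ℤ) - (walkX W (diag e) + 2 * walkY W (diag e)) < 2 * left e ∧
      2 * left e ≤ (diag e : ℤ) - walkX W (diag e) := by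
  simp [decode]

lemma isIntervalClosed_decode (W : List QStep) : IsIntervalClosed (decode n W) := by
  intro x hx y hy z ⟨hxz, _⟩ ⟨hzy, _⟩
  rw [mem_decode] at hx hy ⊢
  rw [rootLE_iff] at hxz hzy
  have hx' := (left_diag_bounds x).2.1
  have hz' := (left_diag_bounds z).2.1
  have hy' := (left_diag_bounds y).2.1
  have h₁ := (monotone_walkXY W).2 (show left y + right z ≤ diag y by simp only [diag]; omega)
  have h₂ := (monotone_walkXY W).1 (show left y + right z ≤ diag z by simp only [diag]; omega)
  have h₃ := (monotone_walkX W).2 (show left z + right x ≤ diag z by simp only [diag]; omega)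
  have h₄ := (monotone_walkX W).1 (show left z + right x ≤ diag x by simp only [diag]; omega)
  simp only [diag] at *
  push_cast at *
  constructor <;> linarith

namespace IsAdmissibleWalk

variable (hW : IsAdmissibleWalk n W)
include hW

lemma mem_slice_decode_iff (hs : s ≤ 2 * n) :
    i ∈ slice (decode n W) s ↔
      (s : ℤ) - (walkX W s + 2 * walkY W s) < 2 * i ∧ 2 * i ≤ (s : ℤ) - walkX W s := by
  constructor
  · intro h
    obtain ⟨e, he, rfl, rfl⟩ := mem_slice.1 h
    exact mem_decode.1 he
  · intro h
    have := hW.walkX_nonneg s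
    have := hW.walkXY_le hs
    have := walkXY_le_self W s
    have hsi : i + (s - i) = s := by omega
    have hz : ofEndpoints i (s - i) (by omega) (by omega) (by omega) ∈ decode n W := by
      rw [mem_decode]
      simpa only [diag, left_ofEndpoints, right_ofEndpoints, hsi] using h
    simpa [diag, hsi] using left_mem_slice hz

lemma card_slice_decode (hs : s ≤ 2 * n) : ((slice (decode n W) s).card : ℤ) = walkY W s := by
  obtain ⟨m, hm⟩ := two_dvd_sub_walkX (hW.1 ▸ hs : s ≤ W.length)
  obtain ⟨y, hy⟩ := Int.eq_ofNat_of_zero_le (hW.walkY_nonneg s)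
  have := walkXY_le_self W s
  lift m to ℕ using by omega
  have : slice (decode n W) s = Finset.Ioc (m - y) m := by
    ext i
    rw [hW.mem_slice_decode_iff hs, Finset.mem_Ioc]
    omega
  rw [this, Nat.card_Ioc]
  omega

lemma exists_mem_decode (ht : 0 < walkY W t) :
    ∃ e ∈ decode n W, diag e = t ∧ 2 * (left e : ℤ) = t - walkX W t := by
  have htn : t < 2 * n := by
    by_contra! h
    rw [hW.walkY_eq_zero h] at ht
    exact lt_irrefl 0 ht
  obtain ⟨m, hm⟩ := two_dvd_sub_walkX (hW.1 ▸ htn.le : t ≤ W.length)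
  have := walkXY_le_self W t
  lift m to ℕ using by omega
  obtain ⟨e, he, hd, hl⟩ := mem_slice.1 ((hW.mem_slice_decode_iff htn.le (i := m)).2 (by omega))
  exact ⟨e, he, hd, by omega⟩

lemma two_mul_leftSteps_decode (hs : s ≤ 2 * n) :
    2 * (leftSteps (decode n W) s : ℤ) = s - walkX W s := by
  have hXY := hW.walkXY_le hs
  have hY := hW.walkY_nonneg s
  refine le_antisymm ?_ ?_
  · obtain ⟨m, hm⟩ := two_dvd_sub_walkX (hW.1 ▸ hs : s ≤ W.length)
    have := walkXY_le_self W s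
    lift m to ℕ using by omega
    suffices leftSteps (decode n W) s ≤ m by omega
    refine leftSteps_le_iff.2 ⟨by omega, fun e he => ?_⟩
    have hl := (mem_decode.1 he).2
    have h₁ : (diag e : ℤ) - walkX W (diag e) ≤ s - walkX W s ∨
        (s : ℤ) + walkX W s ≤ diag e + walkX W (diag e) := by
      rcases le_total (diag e) s with h | h
      exacts [Or.inl ((monotone_walkX W).2 h), Or.inr ((monotone_walkX W).1 h)]
    omega
  · rcases hY.lt_or_eq with hY | hY
    · obtain ⟨e, he, rfl, hl⟩ := hW.exists_mem_decode hY
      have := le_leftSteps (s := diag e) he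
      omega
    rcases hW.sub_walkX_le_of_walkY_eq_zero hs hY.symm with h | ⟨t, ht, hD⟩
    · have := sub_le_leftSteps (I := decode n W) (s := s)
      omega
    · obtain ⟨e, he, rfl, hl⟩ := hW.exists_mem_decode ht
      have := le_leftSteps (s := s) he
      omega

lemma encode_decode : encode (decode n W) = W := by
  refine eq_of_walkX_eq_of_walkY_eq (length_encode.trans hW.1.symm) (fun k hk => ?_) fun k hk => ?_
  · rw [(isIntervalClosed_decode W).walkX_encode (hW.1 ▸ hk), hW.two_mul_leftSteps_decode (hW.1 ▸ hk)]
    ring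
  · rw [(isIntervalClosed_decode W).walkY_encode (hW.1 ▸ hk), hW.card_slice_decode (hW.1 ▸ hk)]

end IsAdmissibleWalk

lemma IsIntervalClosed.decode_encode {I : Finset (Root n)} (hI : IsIntervalClosed I) :
    decode n (encode I) = I := by
  ext e
  have := left_diag_bounds e
  rw [mem_decode, hI.walkX_encode (by omega), hI.walkY_encode (by omega), mem_iff_left_mem_slice,
    hI.mem_slice_iff]
  omega

end Decode

end TypeARoot

open TypeARoot in
/-- The interval-closed sets of the type `A` root poset `A_{n−1}` are in bijection
with first-quadrant walks of `2n` steps from the origin to the origin with steps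
`{(1,0), (−1,0), (1,−1), (−1,1)}`, in which no `(−1,0)` step ending on the x-axis
is immediately followed by a `(1,0)` step. -/
theorem ics_typeA_root_equiv_walks (n : ℕ) :
    Nonempty ({I : Finset {p : Fin (n - 1) × Fin (n - 1) // p.1 ≤ p.2} //
        ∀ x ∈ I, ∀ y ∈ I, ∀ z : {p : Fin (n - 1) × Fin (n - 1) // p.1 ≤ p.2},
          rootLT x.1 z.1 → rootLT z.1 y.1 → z ∈ I} ≃
      {W : List QStep // W.length = 2 * n ∧ InQuadrant W ∧
        walkX W W.length = 0 ∧ walkY W W.length = 0 ∧ NoWThenE W}) :=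
  ⟨{ toFun := fun I => ⟨encode I.1, IsIntervalClosed.isAdmissibleWalk_encode I.2⟩
     invFun := fun W => ⟨decode n W.1, isIntervalClosed_decode W.1⟩
     left_inv := fun I => Subtype.ext (IsIntervalClosed.decode_encode I.2)
     right_inv := fun W => Subtype.ext (IsAdmissibleWalk.encode_decode W.2) }⟩
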